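/- arXiv:1207.6922 — 5 statements merged into one kernel-verified Lean document; each statement's English description precedes it below -/
import Mathlib

section
/- Let E = EuclideanSpace ℝ (Fin n) with its standard norm ‖·‖, and let v ∈ E with ‖v‖ < 1. Consider the Randers-type Minkowski norm F(y) = ‖y‖ + ⟪v, y⟫. Then the polar body of its unit ball is the closed unit ball centered at v: K°_F = {ξ ∈ E | ‖ξ − v‖ ≤ 1}. -/
open scoped RealInnerProductSpace

/-- For the Randers-type Minkowski norm `F y = ‖y‖ + ⟪v, y⟫` with `‖v‖ < 1`,
the polar body of its unit ball is the closed unit ball centered at `v`. -/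
theorem polar_body_randers_eq_ball (n : ℕ) (v : EuclideanSpace ℝ (Fin n)) (hv : ‖v‖ < 1) :
    {ξ : EuclideanSpace ℝ (Fin n) | ∀ y, ‖y‖ + ⟪v, y⟫ ≤ 1 → ⟪ξ, y⟫ ≤ 1}
      = {ξ : EuclideanSpace ℝ (Fin n) | ‖ξ - v‖ ≤ 1} := by
  ext ξ
  simp only [Set.mem_setOf_eq]
  constructor
  · intro h
    by_contra hc
    push_neg at hc
    set w := ξ - v with hw
    have hwpos : (1:ℝ) < ‖w‖ := hc
    have habs : |⟪v, w⟫| ≤ ‖v‖ * ‖w‖ := abs_real_inner_le_norm v w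
    have habs' := abs_le.mp habs
    have hd : 0 < ‖w‖ + ⟪v, w⟫ := by
      nlinarith [norm_nonneg v]
    set t : ℝ := (‖w‖ + ⟪v, w⟫)⁻¹ with ht
    have htpos : 0 < t := inv_pos.mpr hd
    have hcond : ‖t • w‖ + ⟪v, t • w⟫ ≤ 1 := by
      rw [norm_smul, real_inner_smul_right, Real.norm_eq_abs, abs_of_pos htpos]
      rw [show t * ‖w‖ + t * ⟪v, w⟫ = t * (‖w‖ + ⟪v, w⟫) by ring, ht,
        inv_mul_cancel₀ (ne_of_gt hd)]
    have hy := h (t • w) hcond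
    rw [real_inner_smul_right] at hy
    have hxi : ⟪ξ, w⟫ = ‖w‖ ^ 2 + ⟪v, w⟫ := by
      have : ξ = w + v := by rw [hw]; abel
      rw [this, inner_add_left, real_inner_self_eq_norm_sq]
    rw [hxi] at hy
    have ht1 : t * (‖w‖ + ⟪v, w⟫) = 1 := inv_mul_cancel₀ (ne_of_gt hd)
    nlinarith
  · intro h y hy
    have h1 : ⟪ξ - v, y⟫ ≤ ‖ξ - v‖ * ‖y‖ := real_inner_le_norm _ _
    have h2 : ⟪ξ, y⟫ = ⟪ξ - v, y⟫ + ⟪v, y⟫ := by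
      rw [← inner_add_left]; norm_num
    nlinarith [norm_nonneg y]
end

section
/- Let E = EuclideanSpace ℝ (Fin n) (n ≥ 1) with its standard norm ‖·‖, let v ∈ E with ‖v‖ < 1, and let F(y) = ‖y‖ + ⟪v, y⟫. Then the barycenter of the polar body K°_F equals v, and consequently the recentered polar body {ξ − b(K°_F) | ξ ∈ K°_F} is the standard closed unit ball {ξ ∈ E | ‖ξ‖ ≤ 1}; i.e., the 'improved' norm F_better of a Randers norm is the underlying Euclidean norm. -/
open MeasureTheory
open scoped RealInnerProductSpace

/-- The polar body of the unit ball of `F`, identifying Euclidean space with its dual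
via the inner product. -/
def polarBody {n : ℕ} (F : EuclideanSpace ℝ (Fin n) → ℝ) : Set (EuclideanSpace ℝ (Fin n)) :=
  {ξ | ∀ y, F y ≤ 1 → ⟪ξ, y⟫ ≤ 1}

/-- The barycenter of a set `K` in Euclidean space: the Bochner integral of the identity
over `K`, divided by the volume of `K`. -/
noncomputable def barycenter {n : ℕ} (K : Set (EuclideanSpace ℝ (Fin n))) :
    EuclideanSpace ℝ (Fin n) :=
  (volume K).toReal⁻¹ • ∫ ξ in K, ξ

open Metric Set in
lemma integral_id_closedBall {n : ℕ} (v : EuclideanSpace ℝ (Fin n)) :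
    ∫ ξ in closedBall v 1, ξ = (volume (closedBall v 1)).toReal • v := by
  set B := closedBall v 1 with hB
  have hT : MeasurePreserving (fun t : EuclideanSpace ℝ (Fin n) => (v + v) - t) volume volume :=
    Measure.measurePreserving_sub_left volume (v + v)
  have hemb : MeasurableEmbedding (fun t : EuclideanSpace ℝ (Fin n) => (v + v) - t) :=
    (MeasurableEquiv.subLeft (v + v)).measurableEmbedding
  have hpre : (fun t : EuclideanSpace ℝ (Fin n) => (v + v) - t) ⁻¹' B = B := by
    ext x
    simp only [Set.mem_preimage, hB, mem_closedBall, dist_eq_norm,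
      show v + v - x - v = -(x - v) by abel, norm_neg]
  have key := hT.setIntegral_preimage_emb hemb (fun ξ => ξ) B
  rw [hpre] at key
  have hint : IntegrableOn (fun ξ : EuclideanSpace ℝ (Fin n) => ξ) B volume :=
    continuous_id.continuousOn.integrableOn_compact (isCompact_closedBall v 1)
  have hconst : IntegrableOn (fun _ : EuclideanSpace ℝ (Fin n) => v + v) B volume := by
    exact integrableOn_const measure_closedBall_lt_top.ne
  have h2 : ∫ x in B, ((v + v) - x) = (volume B).toReal • (v + v) - ∫ x in B, x := by
    rw [integral_sub hconst hint, setIntegral_const]; rfl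
  rw [h2] at key
  have h6 : (∫ x in B, x) + (∫ x in B, x) = (volume B).toReal • (v + v) := by
    nth_rewrite 1 [← key]; rw [sub_add_cancel]
  have h7 : (2:ℝ) • (∫ x in B, x) = (2:ℝ) • ((volume B).toReal • v) := by
    rw [two_smul, two_smul, h6, smul_add]
  exact smul_right_injective _ two_ne_zero h7

open Metric Set in
lemma polar_randers {n : ℕ} (v : EuclideanSpace ℝ (Fin n)) (hv : ‖v‖ < 1) :
    polarBody (fun y : EuclideanSpace ℝ (Fin n) => ‖y‖ + ⟪v, y⟫) = closedBall v 1 := by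
  ext ξ
  simp only [polarBody, Set.mem_setOf_eq, mem_closedBall, dist_eq_norm]
  constructor
  · intro h
    by_contra hc
    push_neg at hc
    set w := ξ - v with hw
    have hwnorm : 1 < ‖w‖ := hc
    have hwpos : 0 < ‖w‖ := lt_trans one_pos hwnorm
    have hinner : -‖w‖ < ⟪v, w⟫ := by
      have h1 : |⟪v, w⟫| ≤ ‖v‖ * ‖w‖ := abs_real_inner_le_norm v w
      have h2 : ‖v‖ * ‖w‖ < 1 * ‖w‖ := by
        apply mul_lt_mul_of_pos_right hv hwpos
      have := (abs_le.1 h1).1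
      nlinarith
    set c := ‖w‖ + ⟪v, w⟫ with hcdef
    have hcpos : 0 < c := by simp only [hcdef]; linarith
    have hF : ‖c⁻¹ • w‖ + ⟪v, c⁻¹ • w⟫ ≤ 1 := by
      rw [norm_smul, real_inner_smul_right]
      have : |c⁻¹| = c⁻¹ := abs_of_pos (inv_pos.2 hcpos)
      rw [Real.norm_eq_abs, this, ← mul_add]
      rw [inv_mul_cancel₀ (ne_of_gt hcpos)]
    have := h (c⁻¹ • w) hF
    rw [real_inner_smul_right] at this
    have hξw : ⟪ξ, w⟫ = ‖w‖^2 + ⟪v, w⟫ := by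
      have : ξ = w + v := by rw [hw]; abel
      rw [this, inner_add_left, real_inner_self_eq_norm_sq]
    rw [hξw] at this
    have hgt : c < ‖w‖^2 + ⟪v, w⟫ := by
      simp only [hcdef]; nlinarith
    have : c⁻¹ * (‖w‖^2 + ⟪v, w⟫) > 1 := by
      rw [gt_iff_lt, ← inv_mul_cancel₀ (ne_of_gt hcpos)]
      exact mul_lt_mul_of_pos_left hgt (inv_pos.2 hcpos)
    linarith
  · intro h y hy
    have h1 : ⟪ξ, y⟫ = ⟪ξ - v, y⟫ + ⟪v, y⟫ := by rw [inner_sub_left]; ring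
    have h2 : ⟪ξ - v, y⟫ ≤ ‖ξ - v‖ * ‖y‖ := real_inner_le_norm _ _
    have h3 : ‖ξ - v‖ * ‖y‖ ≤ 1 * ‖y‖ :=
      mul_le_mul_of_nonneg_right h (norm_nonneg y)
    rw [h1]; nlinarith

/-- For the Randers norm `F y = ‖y‖ + ⟪v, y⟫` with `‖v‖ < 1` on a
(at least one-dimensional) Euclidean space, the barycenter of the polar body of the unit
ball of `F` is `v`, and hence the recentered polar body is the standard closed unit
ball, i.e. `F_better` is the underlying Euclidean norm. -/
theorem barycenter_polar_randers (n : ℕ) (hn : 1 ≤ n)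
    (v : EuclideanSpace ℝ (Fin n)) (hv : ‖v‖ < 1) :
    barycenter (polarBody (fun y : EuclideanSpace ℝ (Fin n) => ‖y‖ + ⟪v, y⟫)) = v ∧
    (fun ξ => ξ - barycenter (polarBody (fun y : EuclideanSpace ℝ (Fin n) => ‖y‖ + ⟪v, y⟫))) ''
        polarBody (fun y : EuclideanSpace ℝ (Fin n) => ‖y‖ + ⟪v, y⟫)
      = {ξ : EuclideanSpace ℝ (Fin n) | ‖ξ‖ ≤ 1} := by
  have hpolar := polar_randers v hv
  have hbary : barycenter (polarBody (fun y : EuclideanSpace ℝ (Fin n) => ‖y‖ + ⟪v, y⟫)) = v := by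
    rw [hpolar, barycenter, integral_id_closedBall, smul_smul]
    have hpos : 0 < volume (Metric.closedBall v 1) :=
      Metric.measure_closedBall_pos volume v one_pos
    have hfin : volume (Metric.closedBall v 1) ≠ ⊤ := measure_closedBall_lt_top.ne
    have htR : (volume (Metric.closedBall v 1)).toReal ≠ 0 :=
      ENNReal.toReal_ne_zero.2 ⟨hpos.ne', hfin⟩
    rw [inv_mul_cancel₀ htR, one_smul]
  refine ⟨hbary, ?_⟩
  rw [hbary, hpolar]
  ext x
  simp only [Set.mem_image, Set.mem_setOf_eq, Metric.mem_closedBall, dist_eq_norm]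
  constructor
  · rintro ⟨ξ, hξ, rfl⟩; exact hξ
  · intro hx; exact ⟨x + v, by simpa using hx, by abel⟩
end

section
/- Let F be a Minkowski norm on E = EuclideanSpace ℝ (Fin n) and suppose there exist a vector b ∈ E and a positive-definite symmetric bilinear form Q on E such that the polar body of the unit ball of F is the translate by b of the Q-ellipsoid: K°_F = {b + ξ | ξ ∈ E, Q(ξ, ξ) ≤ 1}. Then F is a Randers norm: there exists a positive-definite symmetric bilinear form g on E such that F(y) = √(g(y, y)) + ⟪b, y⟫ for all y ∈ E. -/
open scoped RealInnerProductSpace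

section Aux

variable {n : ℕ}

local notation "E" => EuclideanSpace ℝ (Fin n)

/-- Cauchy–Schwarz for a positive-definite symmetric bilinear form. -/
lemma aux_cs (Q : E →ₗ[ℝ] E →ₗ[ℝ] ℝ) (hQsymm : ∀ x y, Q x y = Q y x)
    (hQpos : ∀ x, x ≠ 0 → 0 < Q x x) (x y : E) :
    Q x y ^ 2 ≤ Q x x * Q y y := by
  by_cases hy : y = 0
  · simp [hy]
  have hyy : 0 < Q y y := hQpos y hy
  have h := (hQpos (Q y y • x - Q x y • y))
  by_cases hz : Q y y • x - Q x y • y = 0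
  · -- x = (Q x y / Q y y) • y, direct computation
    have hx : Q y y • x = Q x y • y := by
      rwa [sub_eq_zero] at hz
    have : Q y y * Q x y = Q x y * Q y y := by ring
    have h3 : Q (Q y y • x) x = Q (Q x y • y) x := by rw [hx]
    simp only [map_smul, LinearMap.smul_apply, smul_eq_mul, hQsymm y x] at h3
    nlinarith [h3, hyy]
  have h := h hz
  simp only [map_sub, map_smul, LinearMap.sub_apply, LinearMap.smul_apply, smul_eq_mul,
    hQsymm y x] at h
  nlinarith [h, hyy, mul_pos hyy hyy, sq_nonneg (Q x y)]

/-- Riesz-type inverse: there is a linear `B` with `Q (B y) z = ⟪y, z⟫`. -/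
lemma aux_riesz (Q : E →ₗ[ℝ] E →ₗ[ℝ] ℝ) (hQpos : ∀ x, x ≠ 0 → 0 < Q x x) :
    ∃ B : E →ₗ[ℝ] E, Function.Bijective B ∧ ∀ y z, Q (B y) z = ⟪y, z⟫ := by
  let A : E →ₗ[ℝ] E :=
    { toFun := fun x => (InnerProductSpace.toDual ℝ E).symm ((Q x).toContinuousLinearMap)
      map_add' := by intro a c; simp [map_add]
      map_smul' := by intro c a; simp [map_smul] }
  have hA : ∀ x z, ⟪A x, z⟫ = Q x z := by
    intro x z
    simp [A, InnerProductSpace.toDual_symm_apply]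
  have hinj : Function.Injective A := by
    rw [← LinearMap.ker_eq_bot, LinearMap.ker_eq_bot']
    intro m hm
    by_contra hm0
    have := hQpos m hm0
    have h2 : ⟪A m, m⟫ = Q m m := hA m m
    rw [hm] at h2
    simp at h2
    linarith [h2 ▸ this]
  have hbij : Function.Bijective A :=
    ⟨hinj, (LinearMap.injective_iff_surjective).mp hinj⟩
  let Aeq := LinearEquiv.ofBijective A hbij
  refine ⟨Aeq.symm.toLinearMap, Aeq.symm.bijective, fun y z => ?_⟩
  have h1 := hA (Aeq.symm y) z
  have h2 : A (Aeq.symm y) = y := Aeq.apply_symm_apply y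
  rw [h2] at h1
  exact h1.symm

lemma aux_dual (φ : E →ₗ[ℝ] ℝ) : ∃ η : E, ∀ z, ⟪η, z⟫ = φ z :=
  ⟨(InnerProductSpace.toDual ℝ E).symm (LinearMap.toContinuousLinearMap φ),
    fun z => by simp [InnerProductSpace.toDual_symm_apply]⟩

end Aux

/-- If the polar body of the unit ball of a Minkowski norm `F` is the
translate by a vector `b` of an ellipsoid `{ξ | Q ξ ξ ≤ 1}` (with `Q` a positive-definite
symmetric bilinear form), then `F` is a Randers norm: `F y = √(g y y) + ⟪b, y⟫` for some
positive-definite symmetric bilinear form `g`. -/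
theorem randers_of_polar_is_translated_ellipsoid (n : ℕ)
    (F : EuclideanSpace ℝ (Fin n) → ℝ)
    (hhom : ∀ s : ℝ, 0 ≤ s → ∀ y, F (s • y) = s * F y)
    (hsub : ∀ y z, F (y + z) ≤ F y + F z)
    (hpos : ∀ y, y ≠ 0 → 0 < F y)
    (b : EuclideanSpace ℝ (Fin n))
    (Q : EuclideanSpace ℝ (Fin n) →ₗ[ℝ] EuclideanSpace ℝ (Fin n) →ₗ[ℝ] ℝ)
    (hQsymm : ∀ x y, Q x y = Q y x)
    (hQpos : ∀ x, x ≠ 0 → 0 < Q x x)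
    (hpolar : {ξ : EuclideanSpace ℝ (Fin n) | ∀ y, F y ≤ 1 → ⟪ξ, y⟫ ≤ 1}
      = (fun ξ => b + ξ) '' {ξ : EuclideanSpace ℝ (Fin n) | Q ξ ξ ≤ 1}) :
    ∃ g : EuclideanSpace ℝ (Fin n) →ₗ[ℝ] EuclideanSpace ℝ (Fin n) →ₗ[ℝ] ℝ,
      (∀ x y, g x y = g y x) ∧ (∀ x, x ≠ 0 → 0 < g x x) ∧
      ∀ y, F y = Real.sqrt (g y y) + ⟪b, y⟫ := by
  have hF0 : F 0 = 0 := by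
    have := hhom 0 le_rfl 0
    simpa using this
  -- any element of the polar set is dominated by F
  have polar_le : ∀ η ∈ {ξ : EuclideanSpace ℝ (Fin n) | ∀ y, F y ≤ 1 → ⟪ξ, y⟫ ≤ 1},
      ∀ z, ⟪η, z⟫ ≤ F z := by
    intro η hη z
    by_cases hz : z = 0
    · simp [hz, hF0]
    have hFz : 0 < F z := hpos z hz
    have h1 : F ((F z)⁻¹ • z) = (F z)⁻¹ * F z := hhom _ (by positivity) z
    have h2 : ⟪η, (F z)⁻¹ • z⟫ ≤ 1 := hη _ (by rw [h1, inv_mul_cancel₀ hFz.ne'])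
    rw [real_inner_smul_right] at h2
    have h3 := mul_le_mul_of_nonneg_left h2 hFz.le
    rw [← mul_assoc, mul_inv_cancel₀ hFz.ne', one_mul, mul_one] at h3
    exact h3
  obtain ⟨B, hBbij, hB⟩ := aux_riesz Q hQpos
  obtain ⟨g, hgapp⟩ : ∃ g : EuclideanSpace ℝ (Fin n) →ₗ[ℝ] EuclideanSpace ℝ (Fin n) →ₗ[ℝ] ℝ,
      ∀ x y, g x y = Q (B x) (B y) := ⟨Q.compl₁₂ B B, fun _ _ => rfl⟩
  have hgsymm : ∀ x y, g x y = g y x := fun x y => by rw [hgapp, hgapp, hQsymm]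
  have hgpos : ∀ x, x ≠ 0 → 0 < g x x := by
    intro x hx
    rw [hgapp]
    exact hQpos _ (fun h => hx (by simpa using hBbij.1 (h.trans (map_zero B).symm)))
  refine ⟨g, hgsymm, hgpos, fun y => ?_⟩
  by_cases hy : y = 0
  · simp [hy, hF0]
  obtain ⟨c, hc⟩ : ∃ c, c = Real.sqrt (g y y) := ⟨_, rfl⟩
  rw [← hc]
  have hgyy : 0 < g y y := hgpos y hy
  have hcpos : 0 < c := hc ▸ Real.sqrt_pos.mpr hgyy
  have hc2 : c ^ 2 = g y y := hc ▸ Real.sq_sqrt hgyy.le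
  have hBy : ⟪B y, y⟫ = g y y := by
    rw [hgapp, hB y (B y), real_inner_comm]
  -- lower bound: F y ≥ c + ⟪b, y⟫
  have hge : c + ⟪b, y⟫ ≤ F y := by
    have hmem : (c⁻¹ • B y) ∈ {ξ : EuclideanSpace ℝ (Fin n) | Q ξ ξ ≤ 1} := by
      simp only [Set.mem_setOf_eq, map_smul, LinearMap.smul_apply, smul_eq_mul]
      rw [← hgapp]
      rw [show c⁻¹ * (c⁻¹ * g y y) = (g y y) / c ^ 2 by ring, hc2]
      simp [hgyy.ne']
    have hmem2 : b + c⁻¹ • B y ∈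
        {ξ : EuclideanSpace ℝ (Fin n) | ∀ y, F y ≤ 1 → ⟪ξ, y⟫ ≤ 1} := by
      rw [hpolar]; exact ⟨_, hmem, rfl⟩
    have := polar_le _ hmem2 y
    rw [inner_add_left, real_inner_smul_left, hBy] at this
    have hcg : c⁻¹ * g y y = c := by
      rw [← hc2, pow_two, inv_mul_cancel_left₀ hcpos.ne']
    rw [hcg] at this
    linarith
  -- upper bound via Hahn-Banach
  have hle : F y ≤ c + ⟪b, y⟫ := by
    have H : ∀ t : ℝ, t • y = 0 → (RingHom.id ℝ) t • F y = 0 := by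
      intro t ht
      rcases smul_eq_zero.mp ht with h | h
      · simp [h]
      · exact absurd h hy
    have hfbound : ∀ x : (LinearPMap.mkSpanSingleton' y (F y) H).domain,
        (LinearPMap.mkSpanSingleton' y (F y) H) x ≤ F x := by
      rintro ⟨x, hx⟩
      have hx' : x ∈ Submodule.span ℝ {y} := by
        rw [LinearPMap.domain_mkSpanSingleton] at hx
        exact hx
      obtain ⟨t, rfl⟩ := Submodule.mem_span_singleton.mp hx'
      rw [show (⟨t • y, hx⟩ : (LinearPMap.mkSpanSingleton' y (F y) H).domain)
          = ⟨t • y, hx⟩ from rfl,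
        LinearPMap.mkSpanSingleton'_apply y (F y) H t hx, RingHom.id_apply, smul_eq_mul]
      rcases le_or_gt 0 t with ht | ht
      · rw [hhom t ht y]
      · have h1 : F (t • y) = (-t) * F (-y) := by
          rw [show t • y = (-t) • (-y) by simp, hhom (-t) (by linarith) (-y)]
        have h2 : 0 ≤ F y + F (-y) := by
          have := hsub y (-y)
          simpa [hF0] using this
        nlinarith
    obtain ⟨φ, hφeq, hφle⟩ := exists_extension_of_le_sublinear
      (LinearPMap.mkSpanSingleton' y (F y) H) F
      (fun t ht x => hhom t ht.le x) hsub hfbound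
    obtain ⟨η, hηapp⟩ := aux_dual φ
    have hηy : ⟪η, y⟫ = F y := by
      rw [hηapp]
      have hmem : y ∈ (LinearPMap.mkSpanSingleton' y (F y) H).domain := by
        rw [LinearPMap.domain_mkSpanSingleton]
        exact Submodule.mem_span_singleton_self y
      rw [hφeq ⟨y, hmem⟩, LinearPMap.mkSpanSingleton'_apply_self y (F y) H hmem]
    have hηle : ∀ z, ⟪η, z⟫ ≤ F z := fun z => (hηapp z) ▸ hφle z
    have hηmem : η ∈ {ξ : EuclideanSpace ℝ (Fin n) | ∀ y, F y ≤ 1 → ⟪ξ, y⟫ ≤ 1} :=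
      fun z hz => (hηle z).trans hz
    rw [hpolar] at hηmem
    obtain ⟨ξ, hξ, hξeq⟩ := hηmem
    have hξy : ⟪ξ, y⟫ ≤ c := by
      have h1 : ⟪ξ, y⟫ = Q ξ (B y) := by
        rw [hQsymm, hB, real_inner_comm]
      have h2 := aux_cs Q hQsymm hQpos ξ (B y)
      have h3 : Q ξ (B y) ^ 2 ≤ g y y := by
        rw [← hgapp y y] at h2
        have h4 : Q ξ ξ * g y y ≤ g y y := mul_le_of_le_one_left hgyy.le hξ
        linarith
      rw [h1]
      by_cases hq : Q ξ (B y) ≤ 0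
      · linarith [hcpos]
      · push_neg at hq
        nlinarith [hc2, hcpos, h3, hq]
    have : F y = ⟪b, y⟫ + ⟪ξ, y⟫ := by
      rw [← hηy, ← hξeq, inner_add_left]
    linarith
  linarith [hge, hle, hle.antisymm hge]
end

section
/- Let n ≥ 3 and E = EuclideanSpace ℝ (Fin n). Let ω be an alternating bilinear form on E (ω : E → E → ℝ bilinear with ω(y, y) = 0 for all y). Suppose ω is invariant under every orientation-preserving linear isometry: for every linear isometry equivalence A : E ≃ E with det(A) = 1 one has ω(A v, A w) = ω(v, w) for all v, w ∈ E. Then ω = 0. -/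
/-- For `n ≥ 3`, an alternating bilinear form on `EuclideanSpace ℝ (Fin n)`
which is invariant under every orientation-preserving linear isometry (i.e. under `SO(n)`)
must vanish. -/
theorem alternating_form_so_invariant_eq_zero (n : ℕ) (hn : 3 ≤ n)
    (ω : EuclideanSpace ℝ (Fin n) →ₗ[ℝ] EuclideanSpace ℝ (Fin n) →ₗ[ℝ] ℝ)
    (halt : ∀ y, ω y y = 0)
    (hinv : ∀ A : EuclideanSpace ℝ (Fin n) ≃ₗᵢ[ℝ] EuclideanSpace ℝ (Fin n),
      LinearMap.det (A.toLinearEquiv : EuclideanSpace ℝ (Fin n) →ₗ[ℝ] EuclideanSpace ℝ (Fin n))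
        = 1 →
      ∀ v w, ω (A v) (A w) = ω v w) :
    ω = 0 := by
  classical
  have key : ∀ i j : Fin n, ω (EuclideanSpace.single i 1) (EuclideanSpace.single j 1) = 0 := by
    intro i j
    by_cases hij : i = j
    · subst hij; exact halt _
    · obtain ⟨m, hmi, hmj⟩ : ∃ m : Fin n, m ≠ i ∧ m ≠ j := by
        have h2 : ({i, j} : Finset (Fin n)).card < n := by
          calc ({i, j} : Finset (Fin n)).card ≤ 2 := Finset.card_insert_le _ _ |>.trans (by simp)
          _ < n := by omega
        have : (({i, j} : Finset (Fin n))ᶜ).Nonempty := by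
          rw [← Finset.card_pos, Finset.card_compl, Fintype.card_fin]; omega
        obtain ⟨m, hm⟩ := this
        simp only [Finset.mem_compl, Finset.mem_insert, Finset.mem_singleton, not_or] at hm
        exact ⟨m, hm.1, hm.2⟩
      set A : EuclideanSpace ℝ (Fin n) ≃ₗᵢ[ℝ] EuclideanSpace ℝ (Fin n) :=
        LinearIsometryEquiv.piLpCongrRight 2
          (fun k => if k = i ∨ k = m then LinearIsometryEquiv.neg ℝ else .refl ℝ ℝ) with hA
      have happ : ∀ (x : EuclideanSpace ℝ (Fin n)) (k : Fin n),
          A x k = (if k = i ∨ k = m then (-1 : ℝ) else 1) * x k := by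
        intro x k
        rw [hA, LinearIsometryEquiv.piLpCongrRight_apply]
        by_cases h : k = i ∨ k = m <;> simp [h]
      have hmat : LinearMap.toMatrix ((EuclideanSpace.basisFun (Fin n) ℝ).toBasis) ((EuclideanSpace.basisFun (Fin n) ℝ).toBasis)
          (A.toLinearEquiv : EuclideanSpace ℝ (Fin n) →ₗ[ℝ] EuclideanSpace ℝ (Fin n))
          = Matrix.diagonal (fun k => if k = i ∨ k = m then (-1 : ℝ) else 1) := by
        ext k l
        rw [LinearMap.toMatrix_apply]
        simp only [OrthonormalBasis.coe_toBasis_repr_apply, OrthonormalBasis.coe_toBasis,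
          EuclideanSpace.basisFun_apply, EuclideanSpace.basisFun_repr]
        change A (EuclideanSpace.single l 1) k = _
        rw [happ]
        by_cases hkl : k = l
        · subst hkl; simp [Matrix.diagonal]
        · simp [Matrix.diagonal, hkl, Pi.single_eq_of_ne hkl]
      have hdet : LinearMap.det
          (A.toLinearEquiv : EuclideanSpace ℝ (Fin n) →ₗ[ℝ] EuclideanSpace ℝ (Fin n)) = 1 := by
        rw [← LinearMap.det_toMatrix ((EuclideanSpace.basisFun (Fin n) ℝ).toBasis), hmat, Matrix.det_diagonal]
        have : ∀ k : Fin n, (if k = i ∨ k = m then (-1 : ℝ) else 1)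
            = if k ∈ ({i, m} : Finset (Fin n)) then (-1 : ℝ) else 1 := by
          intro k; simp [Finset.mem_insert]
        simp_rw [this]
        rw [Finset.prod_ite_mem, Finset.univ_inter, Finset.prod_const]
        have : ({i, m} : Finset (Fin n)).card = 2 := by
          rw [Finset.card_insert_of_notMem (by simp [Ne.symm hmi]), Finset.card_singleton]
        rw [this]; norm_num
      have hAi : A (EuclideanSpace.single i 1) = -(EuclideanSpace.single i 1) := by
        ext k
        rw [happ]
        by_cases hk : k = i
        · subst hk; simp
        · simp [hk, EuclideanSpace.single_apply]
      have hAj : A (EuclideanSpace.single j 1) = EuclideanSpace.single j 1 := by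
        ext k
        rw [happ]
        by_cases hk : k = j
        · subst hk
          have h1 : ¬ (k = i ∨ k = m) :=
            fun h => h.elim (fun e => hij e.symm) (fun e => hmj e.symm)
          simp [h1]
        · simp [hk, EuclideanSpace.single_apply]
      have := hinv A hdet (EuclideanSpace.single i 1) (EuclideanSpace.single j 1)
      rw [hAi, hAj] at this
      simp only [map_neg, LinearMap.neg_apply] at this
      linarith
  -- conclude
  apply Module.Basis.ext (EuclideanSpace.basisFun (Fin n) ℝ).toBasis
  intro i
  apply Module.Basis.ext (EuclideanSpace.basisFun (Fin n) ℝ).toBasis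
  intro j
  simpa [EuclideanSpace.basisFun_apply] using key i j
end

section
/- Let E = EuclideanSpace ℝ (Fin n), let F : E → E → ℝ be continuous with F(x, y) ≥ 0 for all x, y, let f : E → ℝ be continuously differentiable, and let φ : E → E be a bijection such that φ and φ⁻¹ are continuously differentiable. Suppose the pushforward of F by φ equals F + df, i.e., F(φ(x), Dφ_x(y)) = F(x, y) + Df_x(y) for all x, y ∈ E, and that F(x,y) + Df_x(y) ≥ 0 for all x, y. Then φ is an almost isometry of F: for all p, q, r ∈ E, d_F(φ(p), φ(q)) + d_F(φ(q), φ(r)) − d_F(φ(p), φ(r)) = d_F(p,q) + d_F(q,r) − d_F(p,r). -/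
/-- The (generally nonsymmetric) distance induced by a Lagrangian `F`: the infimum of
lengths `∫₀¹ F (c t) (c' t) dt` over curves `c` continuously differentiable on `[0,1]`
from `p` to `q`. -/
noncomputable def finslerDist {n : ℕ}
    (F : EuclideanSpace ℝ (Fin n) → EuclideanSpace ℝ (Fin n) → ℝ)
    (p q : EuclideanSpace ℝ (Fin n)) : ℝ :=
  sInf {l : ℝ | ∃ c : ℝ → EuclideanSpace ℝ (Fin n),
    ContDiffOn ℝ 1 c (Set.Icc 0 1) ∧ c 0 = p ∧ c 1 = q ∧
    l = ∫ t in (0:ℝ)..1, F (c t) (derivWithin c (Set.Icc 0 1) t)}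

section Aux

open Set

/-- The set of lengths of C¹ curves from `p` to `q`. -/
private def lengthSet {n : ℕ}
    (F : EuclideanSpace ℝ (Fin n) → EuclideanSpace ℝ (Fin n) → ℝ)
    (p q : EuclideanSpace ℝ (Fin n)) : Set ℝ :=
  {l : ℝ | ∃ c : ℝ → EuclideanSpace ℝ (Fin n),
    ContDiffOn ℝ 1 c (Set.Icc 0 1) ∧ c 0 = p ∧ c 1 = q ∧
    l = ∫ t in (0:ℝ)..1, F (c t) (derivWithin c (Set.Icc 0 1) t)}

private lemma finslerDist_eq_sInf {n : ℕ}
    (F : EuclideanSpace ℝ (Fin n) → EuclideanSpace ℝ (Fin n) → ℝ)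
    (p q : EuclideanSpace ℝ (Fin n)) :
    finslerDist F p q = sInf (lengthSet F p q) := rfl

private lemma lengthSet_nonempty {n : ℕ}
    (F : EuclideanSpace ℝ (Fin n) → EuclideanSpace ℝ (Fin n) → ℝ)
    (p q : EuclideanSpace ℝ (Fin n)) : (lengthSet F p q).Nonempty := by
  refine ⟨_, ⟨fun t => p + t • (q - p),
    (contDiff_const.add (contDiff_id.smul contDiff_const)).contDiffOn, by simp, by simp, rfl⟩⟩

private lemma lengthSet_bddBelow {n : ℕ}
    (F : EuclideanSpace ℝ (Fin n) → EuclideanSpace ℝ (Fin n) → ℝ)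
    (hFnn : ∀ x y, 0 ≤ F x y)
    (p q : EuclideanSpace ℝ (Fin n)) : BddBelow (lengthSet F p q) := by
  refine ⟨0, ?_⟩
  rintro l ⟨c, hc, h0, h1, rfl⟩
  exact intervalIntegral.integral_nonneg zero_le_one (fun u _ => hFnn _ _)

private lemma curve_hasDerivWithinAt {E E' : Type*} [NormedAddCommGroup E] [NormedSpace ℝ E]
    [NormedAddCommGroup E'] [NormedSpace ℝ E']
    (g : E → E') (hg : ContDiff ℝ 1 g) (c : ℝ → E)
    (hc : ContDiffOn ℝ 1 c (Set.Icc 0 1)) {t : ℝ} (ht : t ∈ Set.Icc (0:ℝ) 1) :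
    HasDerivWithinAt (fun s => g (c s))
      (fderiv ℝ g (c t) (derivWithin c (Set.Icc 0 1) t)) (Set.Icc 0 1) t := by
  have hct : HasDerivWithinAt c (derivWithin c (Set.Icc 0 1) t) (Set.Icc 0 1) t :=
    ((hc t ht).differentiableWithinAt one_ne_zero).hasDerivWithinAt
  exact ((hg.differentiable one_ne_zero (c t)).hasFDerivAt).comp_hasDerivWithinAt t hct

private lemma length_transform {n : ℕ}
    (F : EuclideanSpace ℝ (Fin n) → EuclideanSpace ℝ (Fin n) → ℝ)
    (hFcont : Continuous fun p : EuclideanSpace ℝ (Fin n) × EuclideanSpace ℝ (Fin n) =>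
      F p.1 p.2)
    (f : EuclideanSpace ℝ (Fin n) → ℝ) (hf : ContDiff ℝ 1 f)
    (φ : EuclideanSpace ℝ (Fin n) ≃ EuclideanSpace ℝ (Fin n))
    (hφ : ContDiff ℝ 1 φ)
    (hpush : ∀ x y, F (φ x) (fderiv ℝ φ x y) = F x y + fderiv ℝ f x y)
    (p q : EuclideanSpace ℝ (Fin n)) (c : ℝ → EuclideanSpace ℝ (Fin n))
    (hc : ContDiffOn ℝ 1 c (Set.Icc 0 1)) (h0 : c 0 = p) (h1 : c 1 = q) :
    (∫ t in (0:ℝ)..1, F ((⇑φ ∘ c) t) (derivWithin (⇑φ ∘ c) (Set.Icc 0 1) t))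
      = (∫ t in (0:ℝ)..1, F (c t) (derivWithin c (Set.Icc 0 1) t)) + (f q - f p) := by
  set c' := derivWithin c (Set.Icc 0 1) with hc'def
  have hcc : ContinuousOn c (Set.Icc 0 1) := hc.continuousOn
  have hc'c : ContinuousOn c' (Set.Icc 0 1) :=
    (hc.derivWithin (uniqueDiffOn_Icc one_pos) (m := 0) (by norm_num)).continuousOn
  have hder : ∀ t ∈ Set.Icc (0:ℝ) 1,
      derivWithin (⇑φ ∘ c) (Set.Icc 0 1) t = fderiv ℝ φ (c t) (c' t) := by
    intro t ht
    exact (curve_hasDerivWithinAt (⇑φ) hφ c hc ht).derivWithin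
      (uniqueDiffOn_Icc one_pos t ht)
  have hcongr : Set.EqOn (fun t => F ((⇑φ ∘ c) t) (derivWithin (⇑φ ∘ c) (Set.Icc 0 1) t))
      (fun t => F (c t) (c' t) + fderiv ℝ f (c t) (c' t)) (Set.uIcc 0 1) := by
    intro t ht
    rw [Set.uIcc_of_le zero_le_one] at ht
    simp only [Function.comp_apply, hder t ht, hpush]
  rw [intervalIntegral.integral_congr hcongr]
  have hint1 : IntervalIntegrable (fun t => F (c t) (c' t)) MeasureTheory.volume 0 1 := by
    apply ContinuousOn.intervalIntegrable
    rw [Set.uIcc_of_le zero_le_one]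
    exact hFcont.comp_continuousOn (hcc.prodMk hc'c)
  have hint2 : IntervalIntegrable (fun t => fderiv ℝ f (c t) (c' t))
      MeasureTheory.volume 0 1 := by
    apply ContinuousOn.intervalIntegrable
    rw [Set.uIcc_of_le zero_le_one]
    exact ContinuousOn.clm_apply ((hf.continuous_fderiv one_ne_zero).comp_continuousOn hcc) hc'c
  rw [intervalIntegral.integral_add hint1 hint2]
  congr 1
  have hftc : (∫ t in (0:ℝ)..1, fderiv ℝ f (c t) (c' t)) = f (c 1) - f (c 0) := by
    apply intervalIntegral.integral_eq_sub_of_hasDeriv_right_of_le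
      (f := fun t => f (c t)) (f' := fun t => fderiv ℝ f (c t) (c' t)) zero_le_one
    · exact hf.continuous.comp_continuousOn hcc
    · intro x hx
      exact ((curve_hasDerivWithinAt f hf c hc (Set.mem_Icc_of_Ioo hx)).hasDerivAt
        (Icc_mem_nhds hx.1 hx.2)).hasDerivWithinAt
    · exact hint2
  rw [hftc, h0, h1]

private lemma finslerDist_phi {n : ℕ}
    (F : EuclideanSpace ℝ (Fin n) → EuclideanSpace ℝ (Fin n) → ℝ)
    (hFcont : Continuous fun p : EuclideanSpace ℝ (Fin n) × EuclideanSpace ℝ (Fin n) =>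
      F p.1 p.2)
    (hFnn : ∀ x y, 0 ≤ F x y)
    (f : EuclideanSpace ℝ (Fin n) → ℝ) (hf : ContDiff ℝ 1 f)
    (φ : EuclideanSpace ℝ (Fin n) ≃ EuclideanSpace ℝ (Fin n))
    (hφ : ContDiff ℝ 1 φ) (hφinv : ContDiff ℝ 1 φ.symm)
    (hpush : ∀ x y, F (φ x) (fderiv ℝ φ x y) = F x y + fderiv ℝ f x y)
    (p q : EuclideanSpace ℝ (Fin n)) :
    finslerDist F (φ p) (φ q) = finslerDist F p q + (f q - f p) := by
  set k : ℝ := f q - f p with hk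
  have himg : lengthSet F (φ p) (φ q) = (fun l => l + k) '' lengthSet F p q := by
    ext l
    constructor
    · rintro ⟨c, hc, h0, h1, rfl⟩
      set d : ℝ → EuclideanSpace ℝ (Fin n) := ⇑φ.symm ∘ c with hd_def
      have hd : ContDiffOn ℝ 1 d (Set.Icc 0 1) := hφinv.comp_contDiffOn hc
      have hd0 : d 0 = p := by simp [hd_def, h0]
      have hd1 : d 1 = q := by simp [hd_def, h1]
      have hφd : ⇑φ ∘ d = c := by funext x; simp [hd_def]
      refine ⟨∫ t in (0:ℝ)..1, F (d t) (derivWithin d (Set.Icc 0 1) t),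
        ⟨d, hd, hd0, hd1, rfl⟩, ?_⟩
      have h := length_transform F hFcont f hf φ hφ hpush p q d hd hd0 hd1
      rw [hφd] at h
      exact h.symm
    · rintro ⟨l', ⟨c, hc, h0, h1, rfl⟩, rfl⟩
      exact ⟨⇑φ ∘ c, hφ.comp_contDiffOn hc, by simp [Function.comp, h0],
        by simp [Function.comp, h1],
        (length_transform F hFcont f hf φ hφ hpush p q c hc h0 h1).symm⟩
  rw [finslerDist_eq_sInf, finslerDist_eq_sInf, himg]
  have h := (OrderIso.addRight k).map_csInf' (lengthSet_nonempty F p q)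
    (lengthSet_bddBelow F hFnn p q)
  have himg2 : ⇑(OrderIso.addRight k) '' lengthSet F p q
      = (fun l => l + k) '' lengthSet F p q := rfl
  rw [himg2] at h
  exact h.symm

end Aux

/-- A C¹ diffeomorphism `φ` whose pushforward of `F` equals `F + df` is an
almost isometry of `F`: it preserves the triangular function
`T(p,q,r) = d(p,q) + d(q,r) - d(p,r)`. -/
theorem almost_isometry_of_pushforward_eq_add_df (n : ℕ)
    (F : EuclideanSpace ℝ (Fin n) → EuclideanSpace ℝ (Fin n) → ℝ)
    (hFcont : Continuous fun p : EuclideanSpace ℝ (Fin n) × EuclideanSpace ℝ (Fin n) =>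
      F p.1 p.2)
    (hFnn : ∀ x y, 0 ≤ F x y)
    (f : EuclideanSpace ℝ (Fin n) → ℝ) (hf : ContDiff ℝ 1 f)
    (φ : EuclideanSpace ℝ (Fin n) ≃ EuclideanSpace ℝ (Fin n))
    (hφ : ContDiff ℝ 1 φ) (hφinv : ContDiff ℝ 1 φ.symm)
    (hpush : ∀ x y, F (φ x) (fderiv ℝ φ x y) = F x y + fderiv ℝ f x y)
    (hF'nn : ∀ x y, 0 ≤ F x y + fderiv ℝ f x y) :
    ∀ p q r : EuclideanSpace ℝ (Fin n),
      finslerDist F (φ p) (φ q) + finslerDist F (φ q) (φ r) - finslerDist F (φ p) (φ r)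
        = finslerDist F p q + finslerDist F q r - finslerDist F p r := by
  intro p q r
  rw [finslerDist_phi F hFcont hFnn f hf φ hφ hφinv hpush p q,
    finslerDist_phi F hFcont hFnn f hf φ hφ hφinv hpush q r,
    finslerDist_phi F hFcont hFnn f hf φ hφ hφinv hpush p r]
  ring
end
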